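/- arXiv:2501.17109 — 2 statements merged into one kernel-verified Lean document; each statement's English description precedes it below -/
import Mathlib

section
/- If an MPS tensor A is left (or right) j-stable, then it satisfies the intersection property at all lengths k ≥ j+1: (S_k(A) ⊗ H) ∩ (H ⊗ S_k(A)) = S_{k+1}(A). -/
/-!
Let `v` lie in the intersection. Its slices give matrices `X i`, `Z a` with
`v (w ++ [i]) = tr (X i * A_w)` and `v (a :: w) = tr (Z a * A_w)`. For a left `j`-stable tensor,
`∑ i, Z i * Y i` represents `v`: split a word as `p ++ q ++ [b]` with `|p| = j + 1`. Since
`Y i * A_p ∈ V_j`, the number `tr (Z i * Y i * A_p * A_(q ++ [b]))` is a value of `v` on words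
starting with `i`, so it can be read off through `X b` instead, and then `∑ i, A i * Y i * A_p = A_p`
collapses the sum to `tr (X b * A_p * A_q) = v (p ++ q ++ [b])`. Transposing the matrices and
reversing the words turns right stability into left stability.
-/

open scoped BigOperators

noncomputable section

def prodA {d D : ℕ} (A : Fin d → Matrix (Fin D) (Fin D) ℂ) {k : ℕ} (s : Fin k → Fin d) :
    Matrix (Fin D) (Fin D) ℂ :=
  (List.ofFn fun t => A (s t)).prod

def mpsVec {d D : ℕ} (A : Fin d → Matrix (Fin D) (Fin D) ℂ) (X : Matrix (Fin D) (Fin D) ℂ)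
    (k : ℕ) : (Fin k → Fin d) → ℂ :=
  fun s => (X * prodA A s).trace

def mpsSpace {d D : ℕ} (A : Fin d → Matrix (Fin D) (Fin D) ℂ) (k : ℕ) :
    Submodule ℂ ((Fin k → Fin d) → ℂ) :=
  Submodule.span ℂ (Set.range fun X => mpsVec A X k)

/-- S ⊗ T inside H^{⊗(k+1)}, where S lives on the first k sites and T on the last site. -/
def tensSnoc {d k : ℕ} (S : Submodule ℂ ((Fin k → Fin d) → ℂ))
    (T : Submodule ℂ ((Fin 1 → Fin d) → ℂ)) :
    Submodule ℂ ((Fin (k + 1) → Fin d) → ℂ) :=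
  Submodule.span ℂ
    {v | ∃ f ∈ S, ∃ g ∈ T,
      v = fun s => f (fun t => s (Fin.castSucc t)) * g (fun _ => s (Fin.last k))}

/-- T ⊗ S inside H^{⊗(k+1)}, where T lives on the first site and S on the last k sites. -/
def tensCons {d k : ℕ} (T : Submodule ℂ ((Fin 1 → Fin d) → ℂ))
    (S : Submodule ℂ ((Fin k → Fin d) → ℂ)) :
    Submodule ℂ ((Fin (k + 1) → Fin d) → ℂ) :=
  Submodule.span ℂ
    {v | ∃ f ∈ S, ∃ g ∈ T,
      v = fun s => g (fun _ => s 0) * f (fun t => s t.succ)}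

/-- The virtual MPS subspace V_j(A) ⊆ M_D. -/
def virtSpace {d D : ℕ} (A : Fin d → Matrix (Fin D) (Fin D) ℂ) (j : ℕ) :
    Submodule ℂ (Matrix (Fin D) (Fin D) ℂ) :=
  Submodule.span ℂ (Set.range fun s : Fin j → Fin d => prodA A s)

/-- A is left j-stable. -/
def LeftStable {d D : ℕ} (A : Fin d → Matrix (Fin D) (Fin D) ℂ) (j : ℕ) : Prop :=
  ∃ Y : Fin d → Matrix (Fin D) (Fin D) ℂ,
    (∀ i, ∀ M ∈ virtSpace A (j + 1), Y i * M ∈ virtSpace A j) ∧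
    ∀ M ∈ virtSpace A (j + 1), (∑ i, A i * Y i) * M = M

/-- A is right j-stable. -/
def RightStable {d D : ℕ} (A : Fin d → Matrix (Fin D) (Fin D) ℂ) (j : ℕ) : Prop :=
  ∃ Y : Fin d → Matrix (Fin D) (Fin D) ℂ,
    (∀ i, ∀ M ∈ virtSpace A (j + 1), M * Y i ∈ virtSpace A j) ∧
    ∀ M ∈ virtSpace A (j + 1), M * (∑ i, Y i * A i) = M

open Matrix

variable {d D : ℕ} (A : Fin d → Matrix (Fin D) (Fin D) ℂ)

section Words

def wordProd (w : List (Fin d)) : Matrix (Fin D) (Fin D) ℂ := (w.map A).prod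

@[simp] lemma wordProd_nil : wordProd A [] = 1 := rfl

@[simp] lemma wordProd_cons (a : Fin d) (w : List (Fin d)) :
    wordProd A (a :: w) = A a * wordProd A w := by
  simp [wordProd]

@[simp] lemma wordProd_append (u w : List (Fin d)) :
    wordProd A (u ++ w) = wordProd A u * wordProd A w := by
  simp [wordProd]

lemma prodA_eq_wordProd {k : ℕ} (s : Fin k → Fin d) : prodA A s = wordProd A (List.ofFn s) := by
  rw [wordProd, List.map_ofFn]
  rfl

lemma wordProd_transpose (w : List (Fin d)) :
    wordProd (fun i => (A i)ᵀ) w = (wordProd A w.reverse)ᵀ := by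
  induction w with
  | nil => simp
  | cons a w ih => simp [ih]

lemma List.exists_ofFn_eq {α : Type*} {n : ℕ} {w : List α} (hw : w.length = n) :
    ∃ s : Fin n → α, List.ofFn s = w := by
  subst hw
  exact ⟨w.get, List.ofFn_get w⟩

lemma List.exists_eq_append_append_singleton {α : Type*} {m n : ℕ} {w : List α}
    (hw : w.length = m + n + 1) : ∃ p q b, p.length = m ∧ q.length = n ∧ w = p ++ q ++ [b] := by
  obtain rfl | ⟨u, b, rfl⟩ := w.eq_nil_or_concat'
  · simp at hw
  · refine ⟨u.take m, u.drop m, b, ?_, ?_, by simp⟩ <;> simp at hw ⊢ <;> omega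

end Words

section VirtualSpace

lemma wordProd_mem_virtSpace {j : ℕ} {w : List (Fin d)} (hw : w.length = j) :
    wordProd A w ∈ virtSpace A j := by
  obtain ⟨s, rfl⟩ := List.exists_ofFn_eq hw
  exact Submodule.subset_span ⟨s, prodA_eq_wordProd A s⟩

lemma transpose_mem_virtSpace {j : ℕ} {M : Matrix (Fin D) (Fin D) ℂ} (hM : M ∈ virtSpace A j) :
    Mᵀ ∈ virtSpace (fun i => (A i)ᵀ) j := by
  induction hM using Submodule.span_induction with
  | mem _ hx =>
    obtain ⟨s, rfl⟩ := hx
    change (prodA A s)ᵀ ∈ _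
    rw [prodA_eq_wordProd, ← List.reverse_reverse (List.ofFn s), ← wordProd_transpose]
    exact wordProd_mem_virtSpace _ (by simp)
  | zero => simp
  | add _ _ _ _ hx hy => simpa using add_mem hx hy
  | smul c _ _ hx => simpa using Submodule.smul_mem _ c hx

lemma transpose_mem_virtSpace_iff {j : ℕ} {M : Matrix (Fin D) (Fin D) ℂ} :
    Mᵀ ∈ virtSpace (fun i => (A i)ᵀ) j ↔ M ∈ virtSpace A j := by
  refine ⟨fun hM => ?_, transpose_mem_virtSpace A⟩
  simpa using transpose_mem_virtSpace _ hM

lemma RightStable.leftStable_transpose {j : ℕ} (hA : RightStable A j) :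
    LeftStable (fun i => (A i)ᵀ) j := by
  obtain ⟨Y, hYV, hYA⟩ := hA
  refine ⟨fun i => (Y i)ᵀ, fun i M hM => ?_, fun M hM => ?_⟩
  · rw [← transpose_transpose M, ← transpose_mul, transpose_mem_virtSpace_iff]
    rw [← transpose_transpose M, transpose_mem_virtSpace_iff] at hM
    exact hYV i _ hM
  · rw [← transpose_transpose M, transpose_mem_virtSpace_iff] at hM
    calc (∑ i, (A i)ᵀ * (Y i)ᵀ) * M = (Mᵀ * ∑ i, Y i * A i)ᵀ := by
          simp [transpose_mul, transpose_sum]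
      _ = M := by rw [hYA _ hM, transpose_transpose]

end VirtualSpace

section TensorSlices

variable {k : ℕ} {S : Submodule ℂ ((Fin k → Fin d) → ℂ)} {T : Submodule ℂ ((Fin 1 → Fin d) → ℂ)}
  {v : (Fin (k + 1) → Fin d) → ℂ}

lemma comp_snoc_mem_of_mem_tensSnoc (hv : v ∈ tensSnoc S T) (i : Fin d) :
    (fun s => v (Fin.snoc s i)) ∈ S := by
  induction hv using Submodule.span_induction with
  | mem _ hx =>
    obtain ⟨f, hf, g, -, rfl⟩ := hx
    convert S.smul_mem (g fun _ => i) hf using 1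
    funext s
    simp [mul_comm]
  | zero => exact S.zero_mem
  | add _ _ _ _ hx hy => exact S.add_mem hx hy
  | smul c _ _ hx => exact S.smul_mem c hx

lemma comp_cons_mem_of_mem_tensCons (hv : v ∈ tensCons T S) (a : Fin d) :
    (fun s => v (Fin.cons a s)) ∈ S := by
  induction hv using Submodule.span_induction with
  | mem _ hx =>
    obtain ⟨f, hf, g, -, rfl⟩ := hx
    convert S.smul_mem (g fun _ => a) hf using 1
    funext s
    simp
  | zero => exact S.zero_mem
  | add _ _ _ _ hx hy => exact S.add_mem hx hy
  | smul c _ _ hx => exact S.smul_mem c hx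

lemma sum_mul_mem_tensSnoc {ι : Type*} [Fintype ι] {f : ι → (Fin k → Fin d) → ℂ}
    {g : ι → (Fin 1 → Fin d) → ℂ} (hf : ∀ c, f c ∈ S) (hg : ∀ c, g c ∈ T) :
    (fun s => ∑ c, f c (fun t => s t.castSucc) * g c (fun _ => s (Fin.last k))) ∈ tensSnoc S T := by
  rw [← Finset.univ.sum_fn]
  exact Submodule.sum_mem _ fun c _ => Submodule.subset_span ⟨f c, hf c, g c, hg c, rfl⟩

lemma sum_mul_mem_tensCons {ι : Type*} [Fintype ι] {f : ι → (Fin k → Fin d) → ℂ}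
    {g : ι → (Fin 1 → Fin d) → ℂ} (hf : ∀ c, f c ∈ S) (hg : ∀ c, g c ∈ T) :
    (fun s => ∑ c, g c (fun _ => s 0) * f c (fun t => s t.succ)) ∈ tensCons T S := by
  rw [← Finset.univ.sum_fn]
  exact Submodule.sum_mem _ fun c _ => Submodule.subset_span ⟨f c, hf c, g c, hg c, rfl⟩

end TensorSlices

section MPS

def mpsMap (k : ℕ) : Matrix (Fin D) (Fin D) ℂ →ₗ[ℂ] (Fin k → Fin d) → ℂ :=
  LinearMap.pi fun s => (traceLinearMap (Fin D) ℂ ℂ).comp (LinearMap.mulRight ℂ (prodA A s))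

lemma mpsSpace_eq_range (k : ℕ) : mpsSpace A k = LinearMap.range (mpsMap A k) := by
  rw [mpsSpace, ← (LinearMap.range (mpsMap A k)).span_eq, LinearMap.coe_range]
  rfl

lemma mem_mpsSpace_iff {k : ℕ} {v : (Fin k → Fin d) → ℂ} :
    v ∈ mpsSpace A k ↔ ∃ X, mpsVec A X k = v := by
  rw [mpsSpace_eq_range]
  rfl

lemma trace_mul_eq_sum_trace_single_mul (M N : Matrix (Fin D) (Fin D) ℂ) :
    (M * N).trace = ∑ ab : Fin D × Fin D, M ab.1 ab.2 * (single ab.1 ab.2 1 * N).trace := by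
  rw [Fintype.sum_prod_type]
  simp only [trace_single_mul, smul_eq_mul, one_mul]
  simp [trace, mul_apply]

lemma prodA_snoc {k : ℕ} (s : Fin (k + 1) → Fin d) :
    prodA A s = prodA A (fun t => s t.castSucc) * A (s (Fin.last k)) := by
  rw [prodA_eq_wordProd, prodA_eq_wordProd, List.ofFn_succ', List.concat_eq_append]
  simp

lemma prodA_cons {k : ℕ} (s : Fin (k + 1) → Fin d) :
    prodA A s = A (s 0) * prodA A (fun t => s t.succ) := by
  simp [prodA_eq_wordProd, List.ofFn_succ]

lemma mpsSpace_succ_le_tensSnoc (k : ℕ) : mpsSpace A (k + 1) ≤ tensSnoc (mpsSpace A k) ⊤ := by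
  refine Submodule.span_le.2 (Set.range_subset_iff.2 fun X => ?_)
  rw [SetLike.mem_coe]
  convert sum_mul_mem_tensSnoc (S := mpsSpace A k) (T := ⊤)
    (fun ab : Fin D × Fin D => Submodule.subset_span ⟨single ab.1 ab.2 1 * X, rfl⟩)
    (fun ab : Fin D × Fin D => Submodule.mem_top (x := fun u => A (u 0) ab.1 ab.2)) using 1
  funext s
  show (X * _).trace = _
  rw [prodA_snoc, ← mul_assoc, trace_mul_comm, trace_mul_eq_sum_trace_single_mul]
  exact Finset.sum_congr rfl fun ab _ => by rw [mul_comm, ← mul_assoc]; rfl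

lemma mpsSpace_succ_le_tensCons (k : ℕ) : mpsSpace A (k + 1) ≤ tensCons ⊤ (mpsSpace A k) := by
  refine Submodule.span_le.2 (Set.range_subset_iff.2 fun X => ?_)
  rw [SetLike.mem_coe]
  convert sum_mul_mem_tensCons (S := mpsSpace A k) (T := ⊤)
    (fun ab : Fin D × Fin D => Submodule.subset_span ⟨single ab.1 ab.2 1, rfl⟩)
    (fun ab : Fin D × Fin D => Submodule.mem_top (x := fun u => (X * A (u 0)) ab.1 ab.2)) using 1
  funext s
  show (X * _).trace = _
  rw [prodA_cons, ← mul_assoc, trace_mul_eq_sum_trace_single_mul]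
  rfl

end MPS

section Gluing

variable {A} {j m : ℕ} {f : List (Fin d) → ℂ} {X Z : Fin d → Matrix (Fin D) (Fin D) ℂ}

lemma trace_mul_wordProd_snoc
    (hX : ∀ i w, w.length = j + 1 + m → f (w ++ [i]) = (X i * wordProd A w).trace)
    (hZ : ∀ a w, w.length = j + 1 + m → f (a :: w) = (Z a * wordProd A w).trace)
    (i b : Fin d) {q : List (Fin d)} (hq : q.length = m) {N : Matrix (Fin D) (Fin D) ℂ}
    (hN : N ∈ virtSpace A j) :
    (Z i * (N * wordProd A (q ++ [b]))).trace = (X b * (A i * N * wordProd A q)).trace := by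
  induction hN using Submodule.span_induction with
  | mem _ hx =>
    -- for `N = A_u` both sides are `f (i :: u ++ q ++ [b])`
    obtain ⟨u, rfl⟩ := hx
    change (Z i * (prodA A u * _)).trace = (X b * (A i * prodA A u * _)).trace
    have hZ' := hZ i (List.ofFn u ++ q ++ [b]) (by simp [hq]; omega)
    have hX' := hX b (i :: List.ofFn u ++ q) (by simp [hq]; omega)
    rw [prodA_eq_wordProd]
    simp only [List.cons_append, List.append_assoc, wordProd_cons, wordProd_append, wordProd_nil,
      mul_one, mul_assoc] at hZ' hX' ⊢
    rw [← hZ', hX']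
  | zero => simp
  | add _ _ _ _ hx hy => simp only [add_mul, mul_add, trace_add, hx, hy]
  | smul c _ _ hx => simp only [smul_mul_assoc, mul_smul_comm, trace_smul, hx]

lemma LeftStable.exists_trace_mul_wordProd (hA : LeftStable A j)
    (hX : ∀ i w, w.length = j + 1 + m → f (w ++ [i]) = (X i * wordProd A w).trace)
    (hZ : ∀ a w, w.length = j + 1 + m → f (a :: w) = (Z a * wordProd A w).trace) :
    ∃ Z' : Matrix (Fin D) (Fin D) ℂ,
      ∀ w, w.length = j + 1 + m + 1 → f w = (Z' * wordProd A w).trace := by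
  obtain ⟨Y, hYV, hAY⟩ := hA
  refine ⟨∑ i, Z i * Y i, fun w hw => ?_⟩
  obtain ⟨p, q, b, hp, hq, rfl⟩ := List.exists_eq_append_append_singleton hw
  have hpV : wordProd A p ∈ virtSpace A (j + 1) := wordProd_mem_virtSpace A hp
  calc f (p ++ q ++ [b])
      = (X b * ((∑ i, A i * Y i) * wordProd A p * wordProd A q)).trace := by
        rw [hX b _ (by simp [hp, hq]), hAY _ hpV, wordProd_append]
    _ = ∑ i, (X b * (A i * (Y i * wordProd A p) * wordProd A q)).trace := by
        simp only [Finset.sum_mul, Finset.mul_sum, trace_sum, mul_assoc]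
    _ = ∑ i, (Z i * ((Y i * wordProd A p) * wordProd A (q ++ [b]))).trace := by
        refine Finset.sum_congr rfl fun i _ => ?_
        rw [trace_mul_wordProd_snoc hX hZ i b hq (hYV i _ hpV)]
    _ = ((∑ i, Z i * Y i) * wordProd A (p ++ q ++ [b])).trace := by
        simp only [Finset.sum_mul, trace_sum, List.append_assoc, wordProd_append, mul_assoc]

lemma RightStable.exists_trace_mul_wordProd (hA : RightStable A j)
    (hX : ∀ i w, w.length = j + 1 + m → f (w ++ [i]) = (X i * wordProd A w).trace)
    (hZ : ∀ a w, w.length = j + 1 + m → f (a :: w) = (Z a * wordProd A w).trace) :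
    ∃ Z' : Matrix (Fin D) (Fin D) ℂ,
      ∀ w, w.length = j + 1 + m + 1 → f w = (Z' * wordProd A w).trace := by
  obtain ⟨Z', hZ'⟩ := hA.leftStable_transpose.exists_trace_mul_wordProd
    (m := m) (f := fun w => f w.reverse) (X := fun i => (Z i)ᵀ) (Z := fun i => (X i)ᵀ)
    (fun i w hw => by simpa [wordProd_transpose] using hZ i w.reverse (by simpa using hw))
    (fun a w hw => by simpa [wordProd_transpose] using hX a w.reverse (by simpa using hw))
  refine ⟨Z'ᵀ, fun w hw => ?_⟩
  simpa [wordProd_transpose, ← trace_transpose_mul Z'ᵀ] using hZ' w.reverse (by simpa using hw)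

end Gluing

section WordFunctions

def wordFn {n : ℕ} (v : (Fin n → Fin d) → ℂ) (w : List (Fin d)) : ℂ :=
  if h : w.length = n then v fun t => w.get (t.cast h.symm) else 0

@[simp] lemma wordFn_ofFn {n : ℕ} (v : (Fin n → Fin d) → ℂ) (s : Fin n → Fin d) :
    wordFn v (List.ofFn s) = v s := by
  simp [wordFn]

variable {n : ℕ}

lemma exists_wordFn_append_singleton {v : (Fin (n + 1) → Fin d) → ℂ}
    (hv : v ∈ tensSnoc (mpsSpace A n) ⊤) :
    ∃ X : Fin d → Matrix (Fin D) (Fin D) ℂ,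
      ∀ i w, w.length = n → wordFn v (w ++ [i]) = (X i * wordProd A w).trace := by
  choose X hX using fun i => (mem_mpsSpace_iff A).1 (comp_snoc_mem_of_mem_tensSnoc hv i)
  refine ⟨X, fun i w hw => ?_⟩
  obtain ⟨s, rfl⟩ := List.exists_ofFn_eq hw
  have hs : List.ofFn s ++ [i] = List.ofFn (Fin.snoc s i) := by
    rw [List.ofFn_succ', List.concat_eq_append]
    simp
  rw [hs, wordFn_ofFn, ← prodA_eq_wordProd, ← congrFun (hX i) s]
  rfl

lemma exists_wordFn_cons {v : (Fin (n + 1) → Fin d) → ℂ}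
    (hv : v ∈ tensCons ⊤ (mpsSpace A n)) :
    ∃ Z : Fin d → Matrix (Fin D) (Fin D) ℂ,
      ∀ a w, w.length = n → wordFn v (a :: w) = (Z a * wordProd A w).trace := by
  choose Z hZ using fun a => (mem_mpsSpace_iff A).1 (comp_cons_mem_of_mem_tensCons hv a)
  refine ⟨Z, fun a w hw => ?_⟩
  obtain ⟨s, rfl⟩ := List.exists_ofFn_eq hw
  rw [← List.ofFn_cons, wordFn_ofFn, ← prodA_eq_wordProd, ← congrFun (hZ a) s]
  rfl

lemma mem_mpsSpace_of_wordFn {v : (Fin n → Fin d) → ℂ} {Z : Matrix (Fin D) (Fin D) ℂ}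
    (hv : ∀ w, w.length = n → wordFn v w = (Z * wordProd A w).trace) : v ∈ mpsSpace A n :=
  (mem_mpsSpace_iff A).2 ⟨Z, funext fun s => by
    rw [← wordFn_ofFn v s, hv _ List.length_ofFn, ← prodA_eq_wordProd]
    rfl⟩

end WordFunctions

/-- a j-stable tensor satisfies the intersection property at all k ≥ j+1. -/
theorem stable_implies_intersection {d D : ℕ} (A : Fin d → Matrix (Fin D) (Fin D) ℂ)
    (j : ℕ) (h : LeftStable A j ∨ RightStable A j) :
    ∀ k, j + 1 ≤ k →
      tensSnoc (mpsSpace A k) ⊤ ⊓ tensCons ⊤ (mpsSpace A k) = mpsSpace A (k + 1) := by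
  intro k hk
  obtain ⟨m, rfl⟩ := Nat.exists_eq_add_of_le hk
  refine le_antisymm (fun v hv => ?_)
    (le_inf (mpsSpace_succ_le_tensSnoc A _) (mpsSpace_succ_le_tensCons A _))
  obtain ⟨X, hX⟩ := exists_wordFn_append_singleton A (Submodule.mem_inf.1 hv).1
  obtain ⟨Z, hZ⟩ := exists_wordFn_cons A (Submodule.mem_inf.1 hv).2
  obtain ⟨Z', hZ'⟩ := h.elim (fun hA => hA.exists_trace_mul_wordProd hX hZ)
    (fun hA => hA.exists_trace_mul_wordProd hX hZ)
  exact mem_mpsSpace_of_wordFn A hZ'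
end
end

section
/- For the Dicke MPS tensor (A_0 = 1_D, A_1 = shift) and n ≥ D−1, the physical MPS subspace equals the span of the Dicke states: S_n(A) = Span{ |W_n^0⟩, |W_n^1⟩, …, |W_n^{D−1}⟩ }, where |W_n^p⟩ is the sum of all n-qubit computational basis states with exactly p ones (and |W_n^0⟩ = |0⟩^{⊗n}). -/
open scoped BigOperators

noncomputable section

/-- The computational basis state |s⟩, as a coefficient vector. -/
def basisState {d k : ℕ} (s : Fin k → Fin d) : (Fin k → Fin d) → ℂ :=
  fun t => if t = s then 1 else 0

/-- The nilpotent shift matrix ∑_{i=0}^{D-2} |i⟩⟨i+1|. -/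
def shiftMat (D : ℕ) : Matrix (Fin D) (Fin D) ℂ :=
  Matrix.of fun i j => if (i : ℕ) + 1 = (j : ℕ) then 1 else 0

/-- The Dicke state |W_n^p⟩: the sum of all n-qubit basis states with exactly p ones. -/
def dickeState (n p : ℕ) : (Fin n → Fin 2) → ℂ :=
  ∑ s ∈ Finset.univ.filter
      (fun s : Fin n → Fin 2 => (Finset.univ.filter fun t => s t = 1).card = p),
    basisState s

/-!
Since `A 0 = 1` and `A 1 = S` commute, the product along a bit string `s` with `k` ones is `S ^ k`,
so the MPS coefficient `tr (X * S ^ k)` depends only on `k` and vanishes for `k ≥ D` (as `S ^ D = 0`):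
every MPS vector is a combination of Dicke states. Conversely the boundary `X = |p⟩⟨0|` gives
`tr (X * S ^ k) = (S ^ k) 0 p = δ_{k p}`, i.e. exactly the Dicke state with `p` ones.
-/

abbrev numOnes {k : ℕ} (s : Fin k → Fin 2) : ℕ :=
  (Finset.univ.filter fun t => s t = 1).card

lemma numOnes_succ {k : ℕ} (s : Fin (k + 1) → Fin 2) :
    numOnes s = (if s 0 = 1 then 1 else 0) + numOnes (Fin.tail s) := by
  simp only [numOnes, Finset.card_filter]
  exact Fin.sum_univ_succ _

lemma shiftMat_pow_apply (D q : ℕ) (i j : Fin D) :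
    (shiftMat D ^ q) i j = if (i : ℕ) + q = j then 1 else 0 := by
  induction q generalizing j with
  | zero => simp [Matrix.one_apply, Fin.ext_iff]
  | succ q ih =>
    rw [pow_succ, Matrix.mul_apply]
    simp only [ih]
    simp only [shiftMat, Matrix.of_apply, mul_ite, mul_one, mul_zero]
    by_cases h : (i : ℕ) + q + 1 = j
    · have hq : (i : ℕ) + q < D := by omega
      rw [Finset.sum_eq_single ⟨(i : ℕ) + q, hq⟩ (fun k _ hk => by grind) (by simp)]
      simp [h, ← add_assoc]
    · rw [if_neg (by omega)]
      exact Finset.sum_eq_zero fun k _ => by grind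

lemma shiftMat_pow_eq_zero {D q : ℕ} (h : D ≤ q) : shiftMat D ^ q = 0 := by
  ext i j
  rw [shiftMat_pow_apply, if_neg (by omega)]
  rfl

lemma prodA_eq_pow_numOnes {D : ℕ} (A : Fin 2 → Matrix (Fin D) (Fin D) ℂ)
    (M : Matrix (Fin D) (Fin D) ℂ) (hA0 : A 0 = 1) (hA1 : A 1 = M) :
    ∀ {k : ℕ} (s : Fin k → Fin 2), prodA A s = M ^ numOnes s
  | 0, s => by simp [prodA, numOnes]
  | k + 1, s => by
    have hcons : prodA A s = A (s 0) * prodA A (Fin.tail s) := by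
      simp [prodA, List.ofFn_succ, Fin.tail]
    rw [hcons, prodA_eq_pow_numOnes A M hA0 hA1, numOnes_succ, pow_add]
    rcases Fin.exists_fin_two.mp ⟨s 0, rfl⟩ with h | h <;> simp [h, hA0, hA1]

lemma dickeState_apply (n p : ℕ) (s : Fin n → Fin 2) :
    dickeState n p s = if numOnes s = p then 1 else 0 := by
  simp [dickeState, basisState, Finset.sum_apply]

lemma mpsVec_eq_sum_dickeState {D : ℕ} (A : Fin 2 → Matrix (Fin D) (Fin D) ℂ)
    (hA0 : A 0 = 1) (hA1 : A 1 = shiftMat D) (X : Matrix (Fin D) (Fin D) ℂ) (n : ℕ) :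
    mpsVec A X n = ∑ p : Fin D, (X * shiftMat D ^ (p : ℕ)).trace • dickeState n p := by
  funext s
  simp only [mpsVec, prodA_eq_pow_numOnes A _ hA0 hA1, Finset.sum_apply, Pi.smul_apply,
    dickeState_apply, smul_eq_mul, mul_ite, mul_one, mul_zero]
  by_cases hs : numOnes s < D
  · rw [Finset.sum_eq_single ⟨numOnes s, hs⟩ (fun p _ hp => by grind) (by simp)]
    simp
  · rw [shiftMat_pow_eq_zero (not_lt.mp hs), mul_zero, Matrix.trace_zero]
    exact (Finset.sum_eq_zero fun p _ => by grind).symm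

lemma mpsVec_single_eq_dickeState {D : ℕ} (A : Fin 2 → Matrix (Fin D) (Fin D) ℂ)
    (hA0 : A 0 = 1) (hA1 : A 1 = shiftMat D) (n : ℕ) (p : Fin D) :
    mpsVec A (Matrix.single p ⟨0, p.pos⟩ 1) n = dickeState n p := by
  funext s
  simp only [mpsVec, prodA_eq_pow_numOnes A _ hA0 hA1, Matrix.trace_single_mul,
    shiftMat_pow_apply, dickeState_apply, zero_add, one_smul]

/-- for the Dicke MPS tensor and n ≥ D−1,
S_n(A) = Span{|W_n^0⟩, …, |W_n^{D−1}⟩}. -/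
theorem dicke_mpsSpace (D : ℕ) (A : Fin 2 → Matrix (Fin D) (Fin D) ℂ)
    (hA0 : A 0 = 1) (hA1 : A 1 = shiftMat D) :
    ∀ n, D - 1 ≤ n →
      mpsSpace A n = Submodule.span ℂ {v | ∃ p : Fin D, v = dickeState n p} := by
  intro n _
  apply le_antisymm <;> rw [mpsSpace, Submodule.span_le]
  · rintro v ⟨X, rfl⟩
    change mpsVec A X n ∈ _
    rw [mpsVec_eq_sum_dickeState A hA0 hA1]
    exact Submodule.sum_mem _ fun p _ =>
      Submodule.smul_mem _ _ (Submodule.subset_span ⟨p, rfl⟩)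
  · rintro v ⟨p, rfl⟩
    exact Submodule.subset_span ⟨_, mpsVec_single_eq_dickeState A hA0 hA1 n p⟩
end
end
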